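/- A fuzzy vector u on ℝⁿ is symmetric (i.e., u(t) = u(Qt) for all t ∈ ℝⁿ and all orthogonal matrices Q) if and only if for each α ∈ [0,1] the level set u_α is a closed ball centered at the origin, if and only if for each α ∈ [0,1] the support function h_u(α, −) : S^{n−1} → ℝ is a nonnegative constant function. -/

import Mathlib

open scoped RealInnerProductSpace Pointwise

noncomputable section

/-- A fuzzy vector: regular, compactly supported, quasi-concave, upper semi-continuous
function `u : ℝⁿ → [0,1]`. -/
def IsFuzzyVector {n : ℕ} (u : EuclideanSpace ℝ (Fin n) → ℝ) : Prop :=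
  (∀ t, u t ∈ Set.Icc (0:ℝ) 1) ∧
  (∃ t, u t = 1) ∧
  IsCompact (closure {t | 0 < u t}) ∧
  (∀ s t : EuclideanSpace ℝ (Fin n), ∀ lam ∈ Set.Icc (0:ℝ) 1,
      min (u s) (u t) ≤ u (lam • s + (1 - lam) • t)) ∧
  (∀ α : ℝ, IsClosed {t | α ≤ u t})

/-- The α-level sets of a fuzzy vector. -/
def levelSet {n : ℕ} (u : EuclideanSpace ℝ (Fin n) → ℝ) (α : ℝ) :
    Set (EuclideanSpace ℝ (Fin n)) :=
  if α = 0 then closure {t | 0 < u t} else {t | α ≤ u t}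

/-- The support function of a fuzzy vector. -/
def fuzzySupp {n : ℕ} (u : EuclideanSpace ℝ (Fin n) → ℝ) (α : ℝ)
    (x : EuclideanSpace ℝ (Fin n)) : ℝ :=
  sSup ((fun t => ⟪t, x⟫) '' levelSet u α)

/-- Addition of fuzzy vectors by Zadeh's extension principle. -/
def fuzzyAdd {n : ℕ} (v w : EuclideanSpace ℝ (Fin n) → ℝ) :
    EuclideanSpace ℝ (Fin n) → ℝ :=
  fun t => sSup {m : ℝ | ∃ r s, r + s = t ∧ m = min (v r) (w s)}

/-!
Every level set of a fuzzy vector is a nonempty compact convex set. If `u` is `O(n)`-invariant,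
so is each level set, and the isometries carry a point of maximal norm onto the whole sphere of
that radius, whose convex hull is the ball. Conversely, if the level sets are centred balls then
`u t` depends only on `‖t‖`. Finally, a closed convex set is the intersection of its supporting
half-spaces, so it is determined by its support function, and the ball of radius `r` has
support function `r` on the unit sphere.
-/

open Metric Set

section SupportFunction

variable {E : Type*} [NormedAddCommGroup E] [InnerProductSpace ℝ E]

def supportFunction (K : Set E) (x : E) : ℝ :=
  sSup ((fun t => ⟪t, x⟫) '' K)

theorem LinearIsometryEquiv.exists_apply_eq_of_norm_eq {s t : E} (h : ‖t‖ = ‖s‖) :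
    ∃ Q : E ≃ₗᵢ[ℝ] E, Q t = s :=
  ⟨Submodule.reflection (ℝ ∙ (t - s))ᗮ, Submodule.reflection_sub h⟩

theorem eq_closedBall_of_forall_linearIsometryEquiv_mapsTo {K : Set E} (hne : K.Nonempty)
    (hK : IsCompact K) (hconv : Convex ℝ K) (hinv : ∀ Q : E ≃ₗᵢ[ℝ] E, MapsTo Q K K) :
    ∃ r, 0 ≤ r ∧ K = closedBall 0 r := by
  obtain ⟨t₀, ht₀, hmax⟩ := hK.exists_isMaxOn hne continuous_norm.continuousOn
  refine ⟨‖t₀‖, norm_nonneg _, subset_antisymm (fun y hy => by simpa using hmax hy) ?_⟩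
  have hsphere : sphere 0 ‖t₀‖ ⊆ K := fun s hs => by
    obtain ⟨Q, hQ⟩ :=
      LinearIsometryEquiv.exists_apply_eq_of_norm_eq (mem_sphere_zero_iff_norm.1 hs).symm
    exact hQ ▸ hinv Q ht₀
  rcases subsingleton_or_nontrivial E with hE | hE
  · simpa [Subsingleton.elim t₀ 0] using hsphere
  · rw [← convexHull_sphere_eq_closedBall 0 (norm_nonneg t₀)]
    exact convexHull_min hsphere hconv

theorem isGreatest_inner_image_closedBall {r : ℝ} (hr : 0 ≤ r) (x : E) :
    IsGreatest ((fun t => ⟪t, x⟫) '' closedBall 0 r) (r * ‖x‖) := by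
  refine ⟨⟨(r * ‖x‖⁻¹) • x, ?_, ?_⟩, ?_⟩
  · rcases eq_or_ne x 0 with rfl | hx
    · simpa using hr
    · simp [norm_smul, abs_of_nonneg hr, hx]
  · simp only [real_inner_smul_left, real_inner_self_eq_norm_sq]
    rcases eq_or_ne x 0 with rfl | hx
    · simp
    · field_simp
  · rintro _ ⟨t, ht, rfl⟩
    calc ⟪t, x⟫ ≤ ‖t‖ * ‖x‖ := real_inner_le_norm t x
      _ ≤ r * ‖x‖ := by gcongr; simpa using ht

theorem supportFunction_closedBall {r : ℝ} (hr : 0 ≤ r) (x : E) :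
    supportFunction (closedBall 0 r) x = r * ‖x‖ :=
  (isGreatest_inner_image_closedBall hr x).csSup_eq

theorem subset_of_supportFunction_le [CompleteSpace E] {K L : Set E}
    (hK : ∀ x, BddAbove ((fun t => ⟪t, x⟫) '' K)) (hL : Convex ℝ L) (hLc : IsClosed L)
    (hLne : L.Nonempty) (h : ∀ x, ‖x‖ = 1 → supportFunction K x ≤ supportFunction L x) :
    K ⊆ L := by
  intro y hy
  by_contra hyL
  obtain ⟨f, m, hfL, hfy⟩ := geometric_hahn_banach_closed_point hL hLc hyL
  set v := (InnerProductSpace.toDual ℝ E).symm f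
  have hf : ∀ t, f t = ⟪v, t⟫ := fun t => (InnerProductSpace.toDual_symm_apply).symm
  have hv : ∀ t, ⟪t, ‖v‖⁻¹ • v⟫ = ‖v‖⁻¹ * f t := fun t => by
    rw [real_inner_smul_right, real_inner_comm, hf]
  have hv0 : v ≠ 0 := by
    intro hv0
    obtain ⟨a, ha⟩ := hLne
    have hfa := hfL a ha
    simp only [hf, hv0, inner_zero_left] at hfa hfy
    linarith
  have hvpos : 0 < ‖v‖⁻¹ := by positivity
  have hL_le : supportFunction L (‖v‖⁻¹ • v) ≤ ‖v‖⁻¹ * m := by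
    refine csSup_le (hLne.image _) ?_
    rintro _ ⟨t, ht, rfl⟩
    exact (hv t).trans_le (mul_le_mul_of_nonneg_left (hfL t ht).le hvpos.le)
  have hK_ge : ⟪y, ‖v‖⁻¹ • v⟫ ≤ supportFunction K (‖v‖⁻¹ • v) :=
    le_csSup (hK _) ⟨y, hy, rfl⟩
  have hunit : ‖‖v‖⁻¹ • v‖ = 1 := norm_smul_inv_norm hv0
  linarith [h _ hunit, hv y, mul_lt_mul_of_pos_left hfy hvpos]

theorem eq_closedBall_of_supportFunction_eq [CompleteSpace E] {K : Set E} (hne : K.Nonempty)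
    (hK : IsCompact K) (hconv : Convex ℝ K) {c : ℝ} (hc : 0 ≤ c)
    (h : ∀ x, ‖x‖ = 1 → supportFunction K x = c) :
    K = closedBall 0 c := by
  have hball : ∀ x, ‖x‖ = 1 → supportFunction (closedBall (0 : E) c) x = c := fun x hx => by
    rw [supportFunction_closedBall hc, hx, mul_one]
  refine subset_antisymm ?_ ?_
  · refine subset_of_supportFunction_le
      (fun x => (hK.image (continuous_id.inner continuous_const)).bddAbove)
      (convex_closedBall 0 c) isClosed_closedBall (nonempty_closedBall.2 hc) fun x hx => ?_
    rw [h x hx, hball x hx]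
  · refine subset_of_supportFunction_le
      (fun x => (isGreatest_inner_image_closedBall hc x).bddAbove) hconv hK.isClosed hne
      fun x hx => ?_
    rw [h x hx, hball x hx]

end SupportFunction

section FuzzyVector

variable {n : ℕ} {u : EuclideanSpace ℝ (Fin n) → ℝ}

theorem levelSet_of_pos {α : ℝ} (hα : 0 < α) : levelSet u α = {t | α ≤ u t} :=
  if_neg hα.ne'

theorem levelSet_preimage (Q : EuclideanSpace ℝ (Fin n) ≃ₜ EuclideanSpace ℝ (Fin n))
    (hQ : ∀ t, u (Q t) = u t) (α : ℝ) : Q ⁻¹' levelSet u α = levelSet u α := by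
  unfold levelSet
  split_ifs
  · rw [Q.preimage_closure]
    congr 1
    ext t
    simp [hQ]
  · ext t
    simp [hQ]

namespace IsFuzzyVector

theorem min_le_apply_add (hu : IsFuzzyVector u) (s t : EuclideanSpace ℝ (Fin n)) {a b : ℝ}
    (ha : 0 ≤ a) (hb : 0 ≤ b) (hab : a + b = 1) : min (u s) (u t) ≤ u (a • s + b • t) := by
  obtain rfl : b = 1 - a := by linarith
  exact hu.2.2.2.1 s t a ⟨ha, by linarith⟩

theorem convex_levelSet (hu : IsFuzzyVector u) (α : ℝ) : Convex ℝ (levelSet u α) := by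
  unfold levelSet
  split_ifs
  · refine Convex.closure fun s hs t ht a b ha hb hab => ?_
    exact (lt_min hs ht).trans_le (hu.min_le_apply_add s t ha hb hab)
  · exact fun s hs t ht a b ha hb hab => (le_min hs ht).trans (hu.min_le_apply_add s t ha hb hab)

theorem levelSet_nonempty (hu : IsFuzzyVector u) {α : ℝ} (hα : α ≤ 1) :
    (levelSet u α).Nonempty := by
  obtain ⟨t, ht⟩ := hu.2.1
  refine ⟨t, ?_⟩
  unfold levelSet
  split_ifs
  · exact subset_closure (by simp [ht])
  · simpa [ht] using hα

theorem isCompact_levelSet (hu : IsFuzzyVector u) {α : ℝ} (hα : 0 ≤ α) :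
    IsCompact (levelSet u α) := by
  unfold levelSet
  split_ifs with h
  · exact hu.2.2.1
  · refine hu.2.2.1.of_isClosed_subset (hu.2.2.2.2 α) fun t ht => subset_closure ?_
    exact (lt_of_le_of_ne hα (Ne.symm h)).trans_le ht

theorem apply_le_of_norm_le (hu : IsFuzzyVector u)
    (hball : ∀ α ∈ Icc (0 : ℝ) 1, ∃ r, 0 ≤ r ∧ levelSet u α = closedBall 0 r)
    {s t : EuclideanSpace ℝ (Fin n)} (hst : ‖s‖ ≤ ‖t‖) : u t ≤ u s := by
  rcases le_or_gt (u t) 0 with ht0 | ht0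
  · exact ht0.trans (hu.1 s).1
  obtain ⟨r, -, hr⟩ := hball (u t) ⟨ht0.le, (hu.1 t).2⟩
  have ht : t ∈ levelSet u (u t) := by
    rw [levelSet_of_pos ht0]
    exact le_refl (u t)
  have hs : s ∈ levelSet u (u t) := by
    rw [hr] at ht ⊢
    simpa using hst.trans (by simpa using ht)
  rwa [levelSet_of_pos ht0] at hs

end IsFuzzyVector

end FuzzyVector

theorem stmt15 {n : ℕ} (u : EuclideanSpace ℝ (Fin n) → ℝ) (hu : IsFuzzyVector u) :
    ((∀ Q : EuclideanSpace ℝ (Fin n) ≃ₗᵢ[ℝ] EuclideanSpace ℝ (Fin n),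
        ∀ t, u (Q t) = u t) ↔
      (∀ α ∈ Set.Icc (0:ℝ) 1, ∃ r : ℝ, 0 ≤ r ∧
        levelSet u α = Metric.closedBall 0 r)) ∧
    ((∀ α ∈ Set.Icc (0:ℝ) 1, ∃ r : ℝ, 0 ≤ r ∧
        levelSet u α = Metric.closedBall 0 r) ↔
      (∀ α ∈ Set.Icc (0:ℝ) 1, ∃ c : ℝ, 0 ≤ c ∧
        ∀ x : EuclideanSpace ℝ (Fin n), ‖x‖ = 1 → fuzzySupp u α x = c)) := by
  refine ⟨⟨fun hinv α hα => ?_, fun hball Q t => ?_⟩, fun hball α hα => ?_, fun hsupp α hα => ?_⟩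
  · refine eq_closedBall_of_forall_linearIsometryEquiv_mapsTo (hu.levelSet_nonempty hα.2)
      (hu.isCompact_levelSet hα.1) (hu.convex_levelSet α) fun Q t ht => ?_
    rwa [← levelSet_preimage Q.toHomeomorph (hinv Q)] at ht
  · exact le_antisymm (hu.apply_le_of_norm_le hball (by simp))
      (hu.apply_le_of_norm_le hball (by simp))
  · obtain ⟨r, hr, hK⟩ := hball α hα
    refine ⟨r, hr, fun x hx => ?_⟩
    change supportFunction _ x = r
    rw [hK, supportFunction_closedBall hr, hx, mul_one]
  · obtain ⟨c, hc, h⟩ := hsupp α hα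
    exact ⟨c, hc, eq_closedBall_of_supportFunction_eq (hu.levelSet_nonempty hα.2)
      (hu.isCompact_levelSet hα.1) (hu.convex_levelSet α) hc h⟩
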